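/- arXiv:1601.03477 — 2 statements merged into one kernel-verified Lean document; each statement's English description precedes it below -/
import Mathlib

section
/- Let T be an E0-large tree and σ ∈ 2^{<ω}. Then either σ·T = T or the intersection T ∩ (σ·T) is finite. -/
namespace E0L

/-- Finite binary strings `2^{<ω}`. -/
abbrev Str : Type := List Bool

/-- Sets of binary strings (in particular, trees). -/
abbrev Tr : Type := Set Str

/-- The action `s·t` of a string on a string:
`(s·t)(k) = t(k) + s(k) mod 2` for `k < min(|s|,|t|)` and `(s·t)(k) = t(k)` otherwise. -/
def act (s t : Str) : Str := List.ofFn fun k : Fin t.length => Bool.xor (s.getD k false) (t.get k)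

/-- The action `s·T` of a string on a set of strings. -/
def actT (s : Str) (T : Tr) : Tr := (act s) '' T

/-- `T ↾ s = {t ∈ T : s ⊆ t or t ⊆ s}`. -/
def restr (T : Tr) (s : Str) : Tr := {t ∈ T | s <+: t ∨ t <+: s}

/-- `[T]`, the set of infinite branches of `T` (as elements of Cantor space `2^ω`). -/
def branches (T : Tr) : Set (ℕ → Bool) := {x | ∀ n : ℕ, (List.ofFn fun k : Fin n => x k) ∈ T}

/-- `T[s] = {t : s ⊆ t or t ⊂ s}`. -/
def Tbr (s : Str) : Tr := {t | s <+: t ∨ (t <+: s ∧ t ≠ s)}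

/-- `LTwit T r q` : the strings `q i n` witness that `T` is an E0-large tree with stem `r`:
`|q^0_n| = |q^1_n| ≥ 1`, `q^i_n(0) = i`, and `T` consists of all initial segments of strings
of the form `r⌢q^{i(0)}_0⌢…⌢q^{i(n)}_n`. -/
def LTwit (T : Tr) (r : Str) (q : ℕ → Bool → Str) : Prop :=
  (∀ n : ℕ, (q n true).length = (q n false).length ∧ 1 ≤ (q n false).length) ∧
  (∀ n : ℕ, ∀ i : Bool, (q n i).head? = some i) ∧
  T = {t | ∃ n : ℕ, ∃ f : ℕ → Bool,
        t <+: r ++ ((List.range (n+1)).map (fun k => q k (f k))).flatten}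

/-- `T` is an E0-large tree (`T ∈ LT`). -/
def IsLT (T : Tr) : Prop := ∃ r q, LTwit T r q

/-- `stem T` : the longest `s ∈ T` with `T = T↾s`. -/
noncomputable def stem (T : Tr) : Str :=
  Classical.epsilon fun s => s ∈ T ∧ restr T s = T ∧ ∀ t ∈ T, restr T t = T → t.length ≤ s.length

/-- The canonical witness `(r, q)` of an E0-large tree. -/
noncomputable def witness (T : Tr) : Str × (ℕ → Bool → Str) :=
  Classical.epsilon fun rq => LTwit T rq.1 rq.2

/-- Splitting levels computed from a witness: `spl_0 = |r|`, `spl_{n+1} = spl_n + |q^i_n|`. -/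
def splN (r : Str) (q : ℕ → Bool → Str) : ℕ → ℕ
  | 0 => r.length
  | n+1 => splN r q n + (q n false).length

/-- `spl T n`, the `n`-th splitting level of an E0-large tree `T`. -/
noncomputable def spl (T : Tr) (n : ℕ) : ℕ := splN (witness T).1 (witness T).2 n

/-- Simple splitting `T→i = T↾(stem(T)⌢i)`. -/
noncomputable def split1 (T : Tr) (i : Bool) : Tr := restr T (stem T ++ [i])

/-- Iterated splitting `T→s`: `T→Λ = T`, `T→(s⌢i) = (T→s)→i`. -/
noncomputable def splitS (T : Tr) (s : Str) : Tr := s.foldl split1 T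

/-- `S ⊆_n T` : `S ⊆ T` and `spl_k(S) = spl_k(T)` for all `k < n`. -/
def subN (n : ℕ) (S T : Tr) : Prop := S ⊆ T ∧ ∀ k < n, spl S k = spl T k

/-- A large-tree forcing notion: a set of E0-large trees closed under restriction
and under the action of strings. -/
def IsLTF (P : Set Tr) : Prop :=
  (∀ T ∈ P, IsLT T) ∧
  (∀ T ∈ P, ∀ u ∈ T, restr T u ∈ P) ∧
  (∀ T ∈ P, ∀ s : Str, actT s T ∈ P)

/-- `T` is an `n`-collage over `P`: `T ∈ LT` and `T→s ∈ P` for all `s ∈ 2^n`. -/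
def IsCollage (P : Set Tr) (n : ℕ) (T : Tr) : Prop :=
  IsLT T ∧ ∀ s : Str, s.length = n → splitS T s ∈ P

/-- `D` is open dense in `P` (as a set of trees). -/
def OpenDense1 (P D : Set Tr) : Prop :=
  D ⊆ P ∧ (∀ S ∈ P, ∃ T ∈ D, T ⊆ S) ∧ (∀ S ∈ P, ∀ T ∈ D, S ⊆ T → S ∈ D)

/-- `⟨T,T'⟩` is a condition of the conditional product `P ×_{E0} P`. -/
def CondPair (P : Set Tr) (p : Tr × Tr) : Prop :=
  p.1 ∈ P ∧ p.2 ∈ P ∧ ∃ s : Str, actT s p.1 = p.2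

/-- Componentwise order on pairs of trees: `p ≤ q`. -/
def pleq (p q : Tr × Tr) : Prop := p.1 ⊆ q.1 ∧ p.2 ⊆ q.2

/-- Compatibility of two conditions in `P ×_{E0} P`. -/
def Compat (P : Set Tr) (p q : Tr × Tr) : Prop :=
  ∃ r : Tr × Tr, CondPair P r ∧ pleq r p ∧ pleq r q

/-- `D` is pre-dense in `P ×_{E0} P`. -/
def PreDense2 (P : Set Tr) (D : Set (Tr × Tr)) : Prop :=
  ∀ p : Tr × Tr, CondPair P p → ∃ q ∈ D, Compat P p q

/-- `D` is open dense in `P ×_{E0} P`. -/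
def OpenDense2 (P : Set Tr) (D : Set (Tr × Tr)) : Prop :=
  D ⊆ {p | CondPair P p} ∧
  (∀ p : Tr × Tr, CondPair P p → ∃ q ∈ D, pleq q p) ∧
  (∀ p : Tr × Tr, CondPair P p → ∀ q ∈ D, pleq p q → p ∈ D)

/-- A `P ×_{E0} P`-real name `c = ⟨C_n^i⟩`. -/
def IsRealName (P : Set Tr) (c : ℕ → Bool → Set (Tr × Tr)) : Prop :=
  (∀ n : ℕ, ∀ i : Bool, c n i ⊆ {p | CondPair P p}) ∧
  (∀ n : ℕ, PreDense2 P (c n false ∪ c n true)) ∧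
  (∀ n : ℕ, ∀ p ∈ c n false, ∀ q ∈ c n true, ¬ Compat P p q)

/-- `p` directly forces `c(n) = i`. -/
def DFVal (c : ℕ → Bool → Set (Tr × Tr)) (p : Tr × Tr) (n : ℕ) (i : Bool) : Prop :=
  ∃ q ∈ c n i, pleq p q

/-- `p` directly forces `s ⊂ c`. -/
def DFPrefix (c : ℕ → Bool → Set (Tr × Tr)) (p : Tr × Tr) (s : Str) : Prop :=
  ∀ n < s.length, DFVal c p n (s.getD n false)

/-- `p` directly forces `c ∉ [U]`. -/
def DFAvoid (c : ℕ → Bool → Set (Tr × Tr)) (p : Tr × Tr) (U : Tr) : Prop :=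
  ∃ s : Str, s ∉ U ∧ DFPrefix c p s

/-- `p` directly forces `c ≠ d`: there are incomparable strings `s, t` such that
`p` directly forces `s ⊂ c` and `t ⊂ d`. -/
def DFNe (c d : ℕ → Bool → Set (Tr × Tr)) (p : Tr × Tr) : Prop :=
  ∃ s t : Str, ¬ s <+: t ∧ ¬ t <+: s ∧ DFPrefix c p s ∧ DFPrefix d p t

/-- The action `σ·c` of a string on a real name. -/
def actName (σ : Str) (c : ℕ → Bool → Set (Tr × Tr)) : ℕ → Bool → Set (Tr × Tr) :=
  fun n i => if σ.getD n false = true then c n (!i) else c n i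

/-- The name `π_left` of the left generic real. -/
def piLeft : ℕ → Bool → Set (Tr × Tr) := fun n i =>
  {p | ∃ s t : Str, s.length = n+1 ∧ t.length = n+1 ∧ s.getD n false = i ∧ p = (Tbr s, Tbr t)}

/-- The name `π_right` of the right generic real. -/
def piRight : ℕ → Bool → Set (Tr × Tr) := fun n i =>
  {p | ∃ s t : Str, s.length = n+1 ∧ t.length = n+1 ∧ t.getD n false = i ∧ p = (Tbr s, Tbr t)}

/-!
Write `T` as the set of prefixes of the branches `r⌢q_0^{h 0}⌢…⌢q_{M-1}^{h (M-1)}` and let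
`n = |σ|`. If some `u` with `u, σ·u ∈ T` reaches the `n`-th splitting level, then up to that
level `u` and `σ·u` are branches `f` and `g`, so `σ` acts on strings as their xor. In each block
`k < n` this xor swaps `q_k^0` and `q_k^1` if `f k ≠ g k` and is the identity otherwise, and it
leaves the later blocks alone; hence it maps `T` into `T`, and since the action is an involution,
`σ·T = T`. Otherwise `T ∩ σ·T` lies below the `n`-th splitting level, where there are only finitely
many strings.
-/

section Action

lemma length_act (s t : Str) : (act s t).length = t.length := by simp [act]

lemma getElem_act (s t : Str) (k : ℕ) (hk : k < (act s t).length) :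
    (act s t)[k] = (s.getD k false ^^ t[k]'(by simpa [length_act] using hk)) := by
  simp [act]

lemma act_congr {s s' : Str} (t : Str) (h : ∀ k < t.length, s.getD k false = s'.getD k false) :
    act s t = act s' t :=
  congrArg List.ofFn (funext fun k => by rw [h k k.isLt])

@[simp] lemma act_nil (t : Str) : act [] t = t := by
  apply List.ext_getElem (length_act _ _)
  intro k _ _
  simp [getElem_act]

lemma act_involutive (s : Str) : Function.Involutive (act s) := by
  intro t
  apply List.ext_getElem (by simp only [length_act])
  intro k _ _
  simp [getElem_act]

lemma act_take (s t : Str) (m : ℕ) : act s (t.take m) = (act s t).take m := by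
  apply List.ext_getElem (by simp [length_act])
  intro k _ _
  simp [getElem_act]

lemma act_prefix (s : Str) {t u : Str} (h : t <+: u) : act s t <+: act s u := by
  rw [List.prefix_iff_eq_take.1 h, act_take]
  exact List.take_prefix _ _

lemma act_append (s t₁ t₂ : Str) :
    act s (t₁ ++ t₂) = act (s.take t₁.length) t₁ ++ act (s.drop t₁.length) t₂ := by
  apply List.ext_getElem (by simp [length_act])
  intro k hk _
  simp only [length_act, List.length_append] at hk
  by_cases hk₁ : k < t₁.length
  · simp [getElem_act, List.getElem_append_left, length_act, hk₁, List.getD_eq_getElem?_getD]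
  · rw [List.getElem_append_right (by simpa [length_act] using not_lt.1 hk₁)]
    simp only [getElem_act, length_act, List.getD_eq_getElem?_getD, List.getElem?_drop]
    rw [List.getElem_append_right (by simpa using not_lt.1 hk₁)]
    congr 3
    omega

lemma act_append_of_length_eq {s₁ t₁ : Str} (s₂ t₂ : Str) (h : s₁.length = t₁.length) :
    act (s₁ ++ s₂) (t₁ ++ t₂) = act s₁ t₁ ++ act s₂ t₂ := by
  rw [act_append, ← h, List.take_left' rfl, List.drop_left' rfl]

lemma act_append_of_length_le {s t₁ : Str} (t₂ : Str) (h : s.length ≤ t₁.length) :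
    act s (t₁ ++ t₂) = act s t₁ ++ t₂ := by
  rw [act_append, List.take_of_length_le h, List.drop_eq_nil_of_le h, act_nil]

lemma act_zipWith_xor_left {u v : Str} (h : u.length = v.length) :
    act (List.zipWith Bool.xor u v) u = v := by
  apply List.ext_getElem (by rw [length_act, h])
  intro k hk _
  rw [length_act] at hk
  rw [getElem_act, List.getD_eq_getElem _ _ (by simp [← h, hk]), List.getElem_zipWith]
  cases u[k] <;> simp

lemma act_zipWith_xor_right {u v : Str} (h : u.length = v.length) :
    act (List.zipWith Bool.xor u v) v = u := by
  rw [List.zipWith_comm_of_comm Bool.xor_comm]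
  exact act_zipWith_xor_left h.symm

lemma act_zipWith_xor_self (u t : Str) : act (List.zipWith Bool.xor u u) t = t := by
  rw [act_congr (s' := []) t fun k _ => by simp [List.getD_eq_getElem?_getD], act_nil]

lemma act_zipWith_xor_of_length_eq (p : Bool → Str) (hp : (p true).length = (p false).length)
    (a b c : Bool) : act (List.zipWith Bool.xor (p a) (p b)) (p c) = p (a ^^ b ^^ c) := by
  cases a <;> cases b <;> cases c <;>
    first
      | exact act_zipWith_xor_self _ _
      | exact act_zipWith_xor_left (by simp [hp])
      | exact act_zipWith_xor_right (by simp [hp])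

lemma act_eq_act_zipWith_xor {σ u v : Str} (huv : act σ u = v) (hσ : σ.length ≤ u.length) :
    act σ = act (List.zipWith Bool.xor u v) := by
  have hv : v.length = u.length := by rw [← huv, length_act]
  funext t
  refine act_congr t fun k _ => ?_
  by_cases hk : k < u.length
  · have hvk : v[k] = (σ.getD k false ^^ u[k]) := by subst huv; exact getElem_act σ u k _
    rw [List.getD_eq_getElem (List.zipWith Bool.xor u v) _ (by simp [hv, hk]),
      List.getElem_zipWith, hvk]
    cases u[k] <;> simp
  · rw [List.getD_eq_default _ _ (by omega), List.getD_eq_default _ _ (by simp; omega)]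

lemma actT_eq_self_of_mapsTo {σ : Str} {T : Tr} (h : Set.MapsTo (act σ) T T) : actT σ T = T :=
  (Set.image_subset_iff.2 h).antisymm fun t ht => ⟨act σ t, h ht, act_involutive σ t⟩

end Action

section Branch

variable {r : Str} {q : ℕ → Bool → Str}

def branch (r : Str) (q : ℕ → Bool → Str) (h : ℕ → Bool) : ℕ → Str
  | 0 => r
  | M + 1 => branch r q h M ++ q M (h M)

lemma branch_eq_append_flatten (h : ℕ → Bool) (M : ℕ) :
    branch r q h M = r ++ ((List.range M).map fun k => q k (h k)).flatten := by
  induction M with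
  | zero => simp [branch]
  | succ M ih => simp [branch, ih, List.range_succ]

lemma branch_congr {h h' : ℕ → Bool} {M : ℕ} (H : ∀ k < M, h k = h' k) :
    branch r q h M = branch r q h' M := by
  induction M with
  | zero => rfl
  | succ M ih =>
    rw [branch, branch, ih fun k hk => H k (by omega), H M (by omega)]

lemma branch_prefix_branch (h : ℕ → Bool) {n M : ℕ} (hnM : n ≤ M) :
    branch r q h n <+: branch r q h M := by
  induction M, hnM using Nat.le_induction with
  | base => exact List.prefix_refl _
  | succ M _ ih => exact ih.trans (List.prefix_append _ _)

lemma length_branch (hq : ∀ n, (q n true).length = (q n false).length) (h : ℕ → Bool) (M : ℕ) :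
    (branch r q h M).length = splN r q M := by
  induction M with
  | zero => rfl
  | succ M ih => cases hM : h M <;> simp [branch, splN, ih, hM, hq]

lemma splN_mono : Monotone (splN r q) :=
  monotone_nat_of_le_succ fun _ => Nat.le_add_right _ _

lemma splN_strictMono (hq : ∀ n, 1 ≤ (q n false).length) : StrictMono (splN r q) :=
  strictMono_nat_of_lt_succ fun n => Nat.lt_add_of_pos_right (hq n)

lemma take_splN_of_prefix_branch (hq : ∀ n, (q n true).length = (q n false).length)
    (hq₁ : ∀ n, 1 ≤ (q n false).length) {u : Str} {h : ℕ → Bool} {n M : ℕ}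
    (hu : u <+: branch r q h M) (hn : splN r q n ≤ u.length) :
    u.take (splN r q n) = branch r q h n := by
  have hnM : n ≤ M := (splN_strictMono hq₁).le_iff_le.1
    (hn.trans (length_branch hq h M ▸ hu.length_le))
  rw [List.prefix_iff_eq_take.1 hu, List.take_take, min_eq_left hn, ← length_branch hq h n]
  exact (List.prefix_iff_eq_take.1 (branch_prefix_branch h hnM)).symm

lemma act_zipWith_xor_branch (hq : ∀ n, (q n true).length = (q n false).length)
    (f g h : ℕ → Bool) (n : ℕ) :
    act (List.zipWith Bool.xor (branch r q f n) (branch r q g n)) (branch r q h n)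
      = branch r q (fun k => f k ^^ g k ^^ h k) n := by
  induction n with
  | zero => exact act_zipWith_xor_self r r
  | succ n ih =>
    have hfg : (branch r q f n).length = (branch r q g n).length := by
      rw [length_branch hq, length_branch hq]
    have hlen : (List.zipWith Bool.xor (branch r q f n) (branch r q g n)).length
        = (branch r q h n).length := by
      rw [List.length_zipWith, hfg, min_self, length_branch hq, length_branch hq]
    rw [branch, branch, branch, List.zipWith_append hfg, act_append_of_length_eq _ _ hlen, ih,
      act_zipWith_xor_of_length_eq (q n) (hq n), branch]

lemma act_zipWith_xor_branch_of_le (hq : ∀ n, (q n true).length = (q n false).length)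
    (f g h : ℕ → Bool) {n M : ℕ} (hnM : n ≤ M) :
    act (List.zipWith Bool.xor (branch r q f n) (branch r q g n)) (branch r q h M)
      = branch r q (fun k => if k < n then f k ^^ g k ^^ h k else h k) M := by
  induction M, hnM using Nat.le_induction with
  | base =>
    rw [act_zipWith_xor_branch hq]
    exact branch_congr fun k hk => by simp [hk]
  | succ M hnM ih =>
    have hlen : (List.zipWith Bool.xor (branch r q f n) (branch r q g n)).length
        ≤ (branch r q h M).length := by
      simpa [length_branch hq] using splN_mono hnM
    rw [branch, act_append_of_length_le _ hlen, ih, branch, if_neg (by omega)]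

end Branch

namespace LTwit

variable {T : Tr} {r : Str} {q : ℕ → Bool → Str}

lemma mem_iff (hw : LTwit T r q) {t : Str} : t ∈ T ↔ ∃ h M, t <+: branch r q h M := by
  rw [hw.2.2]
  simp only [Set.mem_ofPred_eq, ← branch_eq_append_flatten]
  constructor
  · rintro ⟨M, h, ht⟩
    exact ⟨h, M + 1, ht⟩
  · rintro ⟨h, M, ht⟩
    exact ⟨M, h, ht.trans (branch_prefix_branch h M.le_succ)⟩

lemma mapsTo_act (hw : LTwit T r q) {σ u : Str} (hu : u ∈ T) (hσu : act σ u ∈ T)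
    (hlen : splN r q σ.length ≤ u.length) : Set.MapsTo (act σ) T T := by
  have hq n : (q n true).length = (q n false).length := (hw.1 n).1
  have hq₁ n : 1 ≤ (q n false).length := (hw.1 n).2
  obtain ⟨f, _, hf⟩ := hw.mem_iff.1 hu
  obtain ⟨g, _, hg⟩ := hw.mem_iff.1 hσu
  have hfσ : u.take (splN r q σ.length) = branch r q f σ.length :=
    take_splN_of_prefix_branch hq hq₁ hf hlen
  have hgσ : (act σ u).take (splN r q σ.length) = branch r q g σ.length :=
    take_splN_of_prefix_branch hq hq₁ hg (by rwa [length_act])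
  have hσ : act σ = act (List.zipWith Bool.xor (branch r q f σ.length) (branch r q g σ.length)) :=
    act_eq_act_zipWith_xor (by rw [← hfσ, ← hgσ, act_take])
      (by rw [length_branch hq]; exact (splN_strictMono hq₁).id_le σ.length)
  intro t ht
  obtain ⟨h, M, ht⟩ := hw.mem_iff.1 ht
  rw [hw.mem_iff, hσ]
  refine ⟨fun k => if k < σ.length then f k ^^ g k ^^ h k else h k, max M σ.length, ?_⟩
  rw [← act_zipWith_xor_branch_of_le hq f g h (le_max_right M σ.length)]
  exact act_prefix _ (ht.trans (branch_prefix_branch h (le_max_left M σ.length)))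

end LTwit

/-- Lemma `trans`(ii): if `T` is an E0-large tree and `σ ∈ 2^{<ω}`,
then either `σ·T = T` or `T ∩ (σ·T)` is finite. -/
theorem stmt1 (T : Tr) (hT : IsLT T) (σ : Str) :
    actT σ T = T ∨ (T ∩ actT σ T).Finite := by
  obtain ⟨r, q, hw⟩ := hT
  by_cases hlong : ∃ u ∈ T ∩ actT σ T, splN r q σ.length ≤ u.length
  · obtain ⟨_, ⟨hσu, u, hu, rfl⟩, hlen⟩ := hlong
    exact Or.inl (actT_eq_self_of_mapsTo (hw.mapsTo_act hu hσu (by rwa [length_act] at hlen)))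
  · refine Or.inr ((List.finite_length_lt Bool (splN r q σ.length)).subset fun u hu => ?_)
    by_contra hshort
    exact hlong ⟨u, hu, not_lt.1 hshort⟩

end E0L
end

section
/- Let S, T be E0-large trees, n < ω, and h = spl_n(T). Then the following are equivalent: (a) S ⊆_n T; (b) S→s ⊆ T→s for every string s of length ≤ n; (c) S ⊆ T and S ∩ 2^h = T ∩ 2^h. -/
namespace E0L

/-!
Fix witnesses `(r, q)` for the trees. A node of `T` is a prefix of some
`r ⌢ q_0(f 0) ⌢ ⋯ ⌢ q_{m-1}(f (m-1))`, so it is determined by its length and its bits at the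
splitting levels `splN r q k`. The splitting levels are exactly the lengths of the nodes both of
whose one-bit extensions lie in `T`; hence they do not depend on the witness, and `S ⊆ T` makes
the levels of `S` a subset of those of `T`, whence `spl_k(T) ≤ spl_k(S)`. Moreover `T→s` is `T`
restricted to `r ⌢ q_0(s_0) ⌢ ⋯ ⌢ q_{|s|-1}(s_{|s|-1})`.

If the first `n` levels agree, the stem of `T→s` is a prefix of that of `S→s` for `|s| ≤ n`,
which gives (b), and every node of `T` of length `spl_n(T)` is such a stem, which gives (c).
Conversely, under (b) a level `spl_k(T) < spl_k(S)` would force the stem of `S→s` to extend both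
one-bit extensions of the stem of `T→s`; under (c) every splitting node of `T` below height `h`
lies in `S` together with its one-bit extensions, so it splits in `S` as well.
-/

lemma le_of_forall_le_mem_range {a b : ℕ → ℕ} (ha : StrictMono a) (hb : StrictMono b) :
    ∀ k, (∀ j ≤ k, b j ∈ Set.range a) → a k ≤ b k
  | 0, h => by
    obtain ⟨m, hm⟩ := h 0 le_rfl
    exact hm ▸ ha.monotone (Nat.zero_le m)
  | k + 1, h => by
    obtain ⟨m, hm⟩ := h (k + 1) le_rfl
    have hk : a k < a m :=
      (le_of_forall_le_mem_range ha hb k fun j hj => h j (by omega)).trans_lt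
        (hm ▸ hb k.lt_succ_self)
    exact hm ▸ ha.monotone (ha.lt_iff_lt.1 hk)

lemma getD_eq_of_prefix {a b : Str} (h : a <+: b) {p : ℕ} (hp : p < a.length) :
    b.getD p false = a.getD p false := by
  rw [List.getD_eq_getElem _ _ (hp.trans_le h.length_le), List.getD_eq_getElem _ _ hp,
    h.getElem hp]

lemma prefix_of_comparable_of_length_le {a b : Str} (h : a <+: b ∨ b <+: a)
    (hlen : a.length ≤ b.length) : a <+: b := by
  rcases h with h | h
  · exact h
  · rw [h.eq_of_length (le_antisymm h.length_le hlen)]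

lemma not_snoc_prefix_and_snoc_prefix (u t : Str) :
    ¬ (u ++ [false] <+: t ∧ u ++ [true] <+: t) := by
  rintro ⟨h0, h1⟩
  simpa using List.prefix_of_prefix_length_le h0 h1 (by simp)

lemma restr_restr {T : Tr} {v u : Str} (h : v <+: u) : restr (restr T v) u = restr T u := by
  ext t
  refine ⟨fun ht => ⟨ht.1.1, ht.2⟩, fun ht => ⟨⟨ht.1, ?_⟩, ht.2⟩⟩
  rcases ht.2 with hut | htu
  · exact Or.inl (h.trans hut)
  · exact List.prefix_or_prefix_of_prefix h htu

lemma stem_eq {T : Tr} {s : Str} (hs : s ∈ T) (hres : restr T s = T)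
    (hmax : ∀ t ∈ T, restr T t = T → t.length ≤ s.length) : stem T = s := by
  obtain ⟨hmem, hres', hmax'⟩ := Classical.epsilon_spec
    (p := fun s => s ∈ T ∧ restr T s = T ∧ ∀ t ∈ T, restr T t = T → t.length ≤ s.length)
    ⟨s, hs, hres, hmax⟩
  have hcomp : s <+: stem T ∨ stem T <+: s := ((Set.ext_iff.1 hres _).2 hmem).2
  have hlen : (stem T).length = s.length := le_antisymm (hmax _ hmem hres') (hmax' s hs hres)
  rcases hcomp with h | h
  · exact (h.eq_of_length hlen.symm).symm
  · exact h.eq_of_length hlen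

def node (r : Str) (q : ℕ → Bool → Str) (f : ℕ → Bool) (m : ℕ) : Str :=
  r ++ ((List.range m).map fun k => q k (f k)).flatten

/-- The stem of `T→s` for a tree with witness `(r, q)`. -/
def splitStem (r : Str) (q : ℕ → Bool → Str) (s : Str) : Str :=
  node r q (fun j => s.getD j false) s.length

def splittingLevels (T : Tr) : Set ℕ := {m | ∃ t ∈ T, t.length = m ∧ ∀ i, t ++ [i] ∈ T}

lemma splittingLevels_mono {S T : Tr} (h : S ⊆ T) : splittingLevels S ⊆ splittingLevels T :=
  fun _ ⟨t, ht, hlen, hsnoc⟩ => ⟨t, h ht, hlen, fun i => h (hsnoc i)⟩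

lemma splitS_append_singleton (T : Tr) (s : Str) (i : Bool) :
    splitS T (s ++ [i]) = split1 (splitS T s) i := by
  simp [splitS]

section Node

variable {r : Str} {q : ℕ → Bool → Str}

@[simp] lemma node_zero (f : ℕ → Bool) : node r q f 0 = r := by simp [node]

lemma node_succ (f : ℕ → Bool) (m : ℕ) : node r q f (m + 1) = node r q f m ++ q m (f m) := by
  simp [node, List.range_succ]

lemma node_prefix_node (f : ℕ → Bool) {m m' : ℕ} (h : m ≤ m') :
    node r q f m <+: node r q f m' := by
  induction m', h using Nat.le_induction with
  | base => exact List.prefix_refl _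
  | succ m' _ ih => exact ih.trans (by rw [node_succ]; exact List.prefix_append _ _)

lemma prefix_node (f : ℕ → Bool) (m : ℕ) : r <+: node r q f m := by
  simpa using node_prefix_node (r := r) (q := q) f (Nat.zero_le m)

lemma node_congr {f g : ℕ → Bool} {m : ℕ} (h : ∀ j < m, f j = g j) :
    node r q f m = node r q g m := by
  unfold node
  congr 2
  exact List.map_congr_left fun j hj => by rw [h j (List.mem_range.1 hj)]

lemma node_update_succ (f : ℕ → Bool) (k : ℕ) (i : Bool) :
    node r q (Function.update f k i) (k + 1) = node r q f k ++ q k i := by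
  rw [node_succ, Function.update_self,
    node_congr fun j hj => Function.update_of_ne (Nat.ne_of_lt hj) _ _]

lemma splitStem_snoc (s : Str) (i : Bool) :
    splitStem r q (s ++ [i]) = splitStem r q s ++ q s.length i := by
  unfold splitStem
  rw [List.length_append, List.length_singleton, node_succ, List.getD_append_right _ _ _ _ le_rfl,
    Nat.sub_self, node_congr (g := fun j => s.getD j false) fun j hj => List.getD_append _ _ _ _ hj]
  rfl

end Node

section Witness

variable {T : Tr} {r : Str} {q : ℕ → Bool → Str}

lemma LTwit.length_q (hw : LTwit T r q) (k : ℕ) (i : Bool) :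
    (q k i).length = (q k false).length := by
  cases i
  · rfl
  · exact (hw.1 k).1

lemma LTwit.singleton_prefix_q (hw : LTwit T r q) (k : ℕ) (i : Bool) : [i] <+: q k i := by
  have := hw.2.1 k i
  cases h : q k i <;> simp_all

lemma LTwit.strictMono_splN (hw : LTwit T r q) : StrictMono (splN r q) :=
  strictMono_nat_of_lt_succ fun m => Nat.lt_add_of_pos_right (hw.1 m).2

lemma LTwit.length_node (hw : LTwit T r q) (f : ℕ → Bool) (m : ℕ) :
    (node r q f m).length = splN r q m := by
  induction m with
  | zero => simp [splN]
  | succ m ih => rw [node_succ, List.length_append, ih, hw.length_q, splN]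

lemma LTwit.getD_node (hw : LTwit T r q) (f : ℕ → Bool) {j m : ℕ} (hj : j < m) :
    (node r q f m).getD (splN r q j) false = f j := by
  have hpre : node r q f j ++ [f j] <+: node r q f m :=
    ((List.prefix_append_right_inj _).2 (hw.singleton_prefix_q j (f j))).trans
      (by rw [← node_succ]; exact node_prefix_node f hj)
  rw [getD_eq_of_prefix hpre (by simp [hw.length_node]), ← hw.length_node f j]
  simp

lemma LTwit.mem_iff_s6 (hw : LTwit T r q) {t : Str} : t ∈ T ↔ ∃ f m, t <+: node r q f m := by
  rw [hw.2.2]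
  refine ⟨fun ⟨m, f, h⟩ => ⟨f, m + 1, h⟩, fun ⟨f, m, h⟩ => ⟨m, f, ?_⟩⟩
  exact h.trans (node_prefix_node f m.le_succ)

lemma LTwit.node_mem (hw : LTwit T r q) (f : ℕ → Bool) (m : ℕ) : node r q f m ∈ T :=
  hw.mem_iff_s6.2 ⟨f, m, List.prefix_refl _⟩

lemma LTwit.mem_of_prefix (hw : LTwit T r q) {t u : Str} (ht : t ∈ T) (hut : u <+: t) :
    u ∈ T := by
  obtain ⟨f, m, h⟩ := hw.mem_iff_s6.1 ht
  exact hw.mem_iff_s6.2 ⟨f, m, hut.trans h⟩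

lemma LTwit.splitStem_mem (hw : LTwit T r q) (s : Str) : splitStem r q s ∈ T :=
  hw.node_mem _ _

lemma LTwit.prefix_or_prefix_stem (hw : LTwit T r q) {t : Str} (ht : t ∈ T) :
    t <+: r ∨ r <+: t := by
  obtain ⟨f, m, h⟩ := hw.mem_iff_s6.1 ht
  exact List.prefix_or_prefix_of_prefix h (prefix_node f m)

lemma LTwit.exists_mem_extension (hw : LTwit T r q) {t : Str} (ht : t ∈ T) {m : ℕ}
    (hm : t.length ≤ m) : ∃ v ∈ T, t <+: v ∧ v.length = m := by
  obtain ⟨f, k, h⟩ := hw.mem_iff_s6.1 ht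
  have hv : t <+: node r q f (max k m) := h.trans (node_prefix_node f (le_max_left k m))
  have hlen : m ≤ (node r q f (max k m)).length := by
    rw [hw.length_node]
    exact (le_max_right k m).trans (hw.strictMono_splN.id_le _)
  refine ⟨(node r q f (max k m)).take m,
    hw.mem_of_prefix (hw.node_mem f _) (List.take_prefix m _), ?_, by simp [hlen]⟩
  exact List.prefix_take_iff.2 ⟨hv, hm⟩

lemma LTwit.getD_eq_of_prefix_node (hw : LTwit T r q) {t : Str} {f : ℕ → Bool} {m j : ℕ}
    (ht : t <+: node r q f m) (hj : splN r q j < t.length) : t.getD (splN r q j) false = f j := by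
  have hjm : j < m := by
    have := ht.length_le
    rw [hw.length_node] at this
    exact hw.strictMono_splN.lt_iff_lt.1 (hj.trans_le this)
  rw [← getD_eq_of_prefix ht hj, hw.getD_node f hjm]

lemma LTwit.eq_of_getD_splN_eq (hw : LTwit T r q) {v w : Str} (hv : v ∈ T) (hw' : w ∈ T)
    (hlen : v.length = w.length)
    (hspl : ∀ j, splN r q j < v.length →
      v.getD (splN r q j) false = w.getD (splN r q j) false) :
    v = w := by
  classical
  obtain ⟨f, m, hvf⟩ := hw.mem_iff_s6.1 hv
  obtain ⟨g, m', hwg⟩ := hw.mem_iff_s6.1 hw'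
  have hex : ∃ k, v.length ≤ splN r q k := ⟨_, hw.strictMono_splN.id_le v.length⟩
  set k := Nat.find hex
  have hfg : ∀ j < k, f j = g j := fun j hj => by
    have hj' : splN r q j < v.length := not_le.1 (Nat.find_min hex hj)
    rw [← hw.getD_eq_of_prefix_node hvf hj', hspl j hj',
      hw.getD_eq_of_prefix_node hwg (hlen ▸ hj')]
  have hprefix : ∀ {u : Str} {f₀ : ℕ → Bool} {m₀ : ℕ}, u.length = v.length →
      u <+: node r q f₀ m₀ → u <+: node r q f₀ k := fun {u f₀ m₀} hu hum => by
    have hkm : k ≤ m₀ := Nat.find_min' hex <| by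
      have := hum.length_le
      rwa [hw.length_node, hu] at this
    exact List.prefix_of_prefix_length_le hum (node_prefix_node _ hkm)
      (by rw [hw.length_node, hu]; exact Nat.find_spec hex)
  have hvk := hprefix rfl hvf
  have hwk := hprefix hlen.symm hwg
  rw [← node_congr hfg] at hwk
  exact (List.prefix_of_prefix_length_le hvk hwk hlen.le).eq_of_length hlen

/-- Inside the block between consecutive splitting levels, a node of `T` has a unique extension. -/
lemma LTwit.prefix_or_prefix_of_common_prefix (hw : LTwit T r q) {u v w : Str} {k : ℕ}
    (hv : v ∈ T) (hw' : w ∈ T) (huv : u <+: v) (huw : u <+: w) (hk : splN r q k < u.length)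
    (hvk : v.length ≤ splN r q (k + 1)) : v <+: w ∨ w <+: v := by
  set m := min v.length w.length
  have hu : u.length ≤ m := le_min huv.length_le huw.length_le
  have htake : v.take m = w.take m := by
    refine hw.eq_of_getD_splN_eq (hw.mem_of_prefix hv (List.take_prefix m v))
      (hw.mem_of_prefix hw' (List.take_prefix m w)) (by simp [m]) fun j hj => ?_
    have hjm : splN r q j < m := hj.trans_le (List.length_take_le m v)
    have hju : splN r q j < u.length := by
      have : j ≤ k := Nat.lt_succ_iff.1 <|
        hw.strictMono_splN.lt_iff_lt.1 (hjm.trans_le ((min_le_left _ _).trans hvk))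
      exact (hw.strictMono_splN.monotone this).trans_lt hk
    rw [← getD_eq_of_prefix (List.take_prefix m v) hj, getD_eq_of_prefix huv hju,
      ← getD_eq_of_prefix huw hju, getD_eq_of_prefix (List.take_prefix m w)
      (by rw [List.length_take]; exact lt_min hjm (hjm.trans_le (min_le_right _ _)))]
  rcases le_total v.length w.length with h | h
  · left
    rw [← List.take_length (l := v), ← min_eq_left h, htake]
    exact List.take_prefix _ _
  · right
    rw [← List.take_length (l := w), ← min_eq_right h, ← htake]
    exact List.take_prefix _ _

lemma LTwit.snoc_mem (hw : LTwit T r q) {t : Str} {k : ℕ} (ht : t ∈ T)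
    (hlen : t.length = splN r q k) (i : Bool) : t ++ [i] ∈ T := by
  obtain ⟨f, m, htf⟩ := hw.mem_iff_s6.1 ht
  have hkm : k ≤ m := by
    have := htf.length_le
    rw [hlen, hw.length_node] at this
    exact hw.strictMono_splN.le_iff_le.1 this
  have htk : t = node r q f k :=
    (List.prefix_of_prefix_length_le htf (node_prefix_node f hkm) (by rw [hlen, hw.length_node])
      ).eq_of_length (by rw [hlen, hw.length_node])
  refine hw.mem_iff_s6.2 ⟨Function.update f k i, k + 1, ?_⟩
  rw [node_update_succ, ← htk]
  exact (List.prefix_append_right_inj t).2 (hw.singleton_prefix_q k i)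

lemma LTwit.exists_splN_eq_length (hw : LTwit T r q) {t : Str} (h0 : t ++ [false] ∈ T)
    (h1 : t ++ [true] ∈ T) : ∃ k, splN r q k = t.length := by
  by_contra hnot
  have hne : ∀ k, splN r q k ≠ t.length := fun k hk => hnot ⟨k, hk⟩
  have heq := hw.eq_of_getD_splN_eq h0 h1 (by simp) fun j hj => by
    have hjt : splN r q j < t.length := by
      have := hne j
      simp only [List.length_append, List.length_singleton] at hj
      omega
    rw [List.getD_append _ _ _ _ hjt, List.getD_append _ _ _ _ hjt]
  simp at heq

lemma LTwit.splittingLevels_eq (hw : LTwit T r q) : splittingLevels T = Set.range (splN r q) := by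
  ext m
  constructor
  · rintro ⟨t, -, rfl, hsnoc⟩
    exact hw.exists_splN_eq_length (hsnoc false) (hsnoc true)
  · rintro ⟨k, rfl⟩
    have hlen := hw.length_node (fun _ => false) k
    exact ⟨_, hw.node_mem _ k, hlen, fun i => hw.snoc_mem (hw.node_mem _ k) hlen i⟩

lemma LTwit.spl_eq (hw : LTwit T r q) : spl T = splN r q := by
  have hwit : LTwit T (witness T).1 (witness T).2 :=
    Classical.epsilon_spec (p := fun rq => LTwit T rq.1 rq.2) ⟨(r, q), hw⟩
  refine (hwit.strictMono_splN.range_inj hw.strictMono_splN).1 ?_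
  rw [← hwit.splittingLevels_eq, ← hw.splittingLevels_eq]

lemma LTwit.restr_stem (hw : LTwit T r q) : restr T r = T :=
  Set.ext fun _ => ⟨fun h => h.1, fun h => ⟨h, (hw.prefix_or_prefix_stem h).symm⟩⟩

lemma LTwit.stem_restr_node (hw : LTwit T r q) (f : ℕ → Bool) (k : ℕ) :
    stem (restr T (node r q f k)) = node r q f k := by
  set p := node r q f k
  have hp : p ∈ T := hw.node_mem f k
  refine stem_eq ⟨hp, Or.inl (List.prefix_refl p)⟩ (restr_restr (List.prefix_refl p))
    fun t _ hres => not_lt.1 fun hlt => ?_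
  have hsnoc : ∀ i, p ++ [i] <+: t := fun i => by
    have hmem : p ++ [i] ∈ restr (restr T p) t := by
      rw [hres]
      exact ⟨hw.snoc_mem hp (hw.length_node f k) i, Or.inl (List.prefix_append p [i])⟩
    exact prefix_of_comparable_of_length_le hmem.2.symm (by simpa using hlt)
  exact not_snoc_prefix_and_snoc_prefix p t ⟨hsnoc false, hsnoc true⟩

lemma LTwit.restr_node_snoc (hw : LTwit T r q) (f : ℕ → Bool) (k : ℕ) (i : Bool) :
    restr T (node r q f k ++ [i]) = restr T (node r q f k ++ q k i) := by
  set p := node r q f k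
  have hpq : p ++ [i] <+: p ++ q k i :=
    (List.prefix_append_right_inj p).2 (hw.singleton_prefix_q k i)
  ext t
  refine ⟨fun ⟨ht, hc⟩ => ⟨ht, ?_⟩, fun ⟨ht, hc⟩ => ⟨ht, ?_⟩⟩
  · rcases hc with h | h
    · have hv : p ++ q k i ∈ T := by
        rw [← node_update_succ]
        exact hw.node_mem _ _
      exact hw.prefix_or_prefix_of_common_prefix (k := k) hv ht hpq h
        (by simp [p, hw.length_node]) (by simp [p, hw.length_node, hw.length_q, splN])
    · exact Or.inr (h.trans hpq)
  · rcases hc with h | h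
    · exact Or.inl (hpq.trans h)
    · exact List.prefix_or_prefix_of_prefix hpq h

lemma LTwit.split1_restr_splitStem (hw : LTwit T r q) (s : Str) (i : Bool) :
    split1 (restr T (splitStem r q s)) i = restr T (splitStem r q s ++ [i]) := by
  rw [split1, splitStem, hw.stem_restr_node, restr_restr (List.prefix_append _ _)]

lemma LTwit.splitS_eq_restr (hw : LTwit T r q) (s : Str) :
    splitS T s = restr T (splitStem r q s) := by
  induction s using List.reverseRecOn with
  | nil => simpa [splitS, splitStem] using hw.restr_stem.symm
  | append_singleton s i ih =>
    rw [splitS_append_singleton, ih, hw.split1_restr_splitStem, splitStem_snoc]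
    exact hw.restr_node_snoc _ _ _

lemma LTwit.splitS_append_singleton_eq_restr (hw : LTwit T r q) (s : Str) (i : Bool) :
    splitS T (s ++ [i]) = restr T (splitStem r q s ++ [i]) := by
  rw [splitS_append_singleton, hw.splitS_eq_restr, hw.split1_restr_splitStem]

lemma LTwit.length_splitStem (hw : LTwit T r q) (s : Str) :
    (splitStem r q s).length = splN r q s.length :=
  hw.length_node _ _

lemma LTwit.eq_splitStem_of_getD (hw : LTwit T r q) {t s : Str} (ht : t ∈ T)
    (hlen : t.length = splN r q s.length)
    (hbits : ∀ j < s.length, t.getD (splN r q j) false = s.getD j false) :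
    t = splitStem r q s :=
  hw.eq_of_getD_splN_eq ht (hw.splitStem_mem s) (by rw [hlen, hw.length_splitStem]) fun j hj => by
    have hjs : j < s.length := hw.strictMono_splN.lt_iff_lt.1 (hlen ▸ hj)
    rw [hbits j hjs, splitStem, hw.getD_node _ hjs]

end Witness

section TwoTrees

variable {S T : Tr} {rS rT : Str} {qS qT : ℕ → Bool → Str}

lemma splN_le_of_subset (hwS : LTwit S rS qS) (hwT : LTwit T rT qT) (hsub : S ⊆ T) (k : ℕ) :
    splN rT qT k ≤ splN rS qS k :=
  le_of_forall_le_mem_range hwT.strictMono_splN hwS.strictMono_splN k fun j _ => by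
    rw [← hwT.splittingLevels_eq]
    exact splittingLevels_mono hsub (hwS.splittingLevels_eq ▸ ⟨j, rfl⟩)

lemma splitStem_prefix_splitStem (hwS : LTwit S rS qS) (hwT : LTwit T rT qT) (hsub : S ⊆ T)
    {n : ℕ} (hspl : ∀ k < n, splN rS qS k = splN rT qT k) {s : Str} (hs : s.length ≤ n) :
    splitStem rT qT s <+: splitStem rS qS s := by
  set p := splitStem rS qS s
  have hlen : splN rT qT s.length ≤ p.length :=
    hwS.length_splitStem s ▸ splN_le_of_subset hwS hwT hsub _
  have htake : p.take (splN rT qT s.length) = splitStem rT qT s := by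
    refine hwT.eq_splitStem_of_getD
      (hwT.mem_of_prefix (hsub (hwS.splitStem_mem s)) (List.take_prefix _ _))
      (by simp [hlen]) fun j hj => ?_
    have hjlen : splN rT qT j < (p.take (splN rT qT s.length)).length := by
      simpa [hlen] using hwT.strictMono_splN hj
    rw [← getD_eq_of_prefix (List.take_prefix _ p) hjlen, ← hspl j (by omega)]
    exact hwS.getD_node _ hj
  rw [← htake]
  exact List.take_prefix _ _

lemma splitS_subset_splitS (hwS : LTwit S rS qS) (hwT : LTwit T rT qT) (hsub : S ⊆ T)
    {n : ℕ} (hspl : ∀ k < n, splN rS qS k = splN rT qT k) {s : Str} (hs : s.length ≤ n) :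
    splitS S s ⊆ splitS T s := by
  rw [hwS.splitS_eq_restr, hwT.splitS_eq_restr]
  have hpre := splitStem_prefix_splitStem hwS hwT hsub hspl hs
  rintro t ⟨ht, hc | hc⟩
  · exact ⟨hsub ht, Or.inl (hpre.trans hc)⟩
  · exact ⟨hsub ht, List.prefix_or_prefix_of_prefix hpre hc⟩

lemma mem_of_length_eq_splN (hwS : LTwit S rS qS) (hwT : LTwit T rT qT) (hsub : S ⊆ T)
    {n : ℕ} (hspl : ∀ k < n, splN rS qS k = splN rT qT k) {t : Str} (ht : t ∈ T)
    (hlen : t.length = splN rT qT n) : t ∈ S := by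
  set s : Str := List.ofFn fun j : Fin n => t.getD (splN rT qT j) false
  have hs : s.length = n := List.length_ofFn
  have hts : t = splitStem rT qT s :=
    hwT.eq_splitStem_of_getD ht (by rw [hs, hlen]) fun j hj => by
      have hjn : j < n := hs ▸ hj
      simp [s, hjn]
  exact hwS.mem_of_prefix (hwS.splitStem_mem s)
    (hts ▸ splitStem_prefix_splitStem hwS hwT hsub hspl hs.le)

lemma splN_eq_of_splitS_subset (hwS : LTwit S rS qS) (hwT : LTwit T rT qT) {n : ℕ}
    (h : ∀ s : Str, s.length ≤ n → splitS S s ⊆ splitS T s) {k : ℕ} (hk : k < n) :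
    splN rS qS k = splN rT qT k := by
  have hsub : S ⊆ T := h [] (Nat.zero_le n)
  refine le_antisymm (not_lt.1 fun hlt => ?_) (splN_le_of_subset hwS hwT hsub k)
  set s : Str := List.replicate k false
  have hs : s.length = k := List.length_replicate
  set pT := splitStem rT qT s
  set pS := splitStem rS qS s
  have hsnoc : ∀ i, pT ++ [i] <+: pS := fun i => by
    have hmem : splitStem rS qS (s ++ [i]) ∈ restr T (pT ++ [i]) := by
      rw [← hwT.splitS_append_singleton_eq_restr]
      refine h _ (by simp [hs]; omega) ?_
      rw [hwS.splitS_eq_restr]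
      exact ⟨hwS.splitStem_mem _, Or.inl (List.prefix_refl _)⟩
    have hlenS : pS.length = splN rS qS k := by rw [hwS.length_splitStem, hs]
    have hlenT : pT.length = splN rT qT k := by rw [hwT.length_splitStem, hs]
    have hext : pT ++ [i] <+: pS ++ qS s.length i := by
      rw [← splitStem_snoc]
      refine prefix_of_comparable_of_length_le hmem.2 ?_
      rw [hwS.length_splitStem, List.length_append, hlenT, List.length_append, hs]
      have := hwS.strictMono_splN (Nat.lt_add_one k)
      simp only [List.length_singleton]
      omega
    exact List.prefix_of_prefix_length_le hext (List.prefix_append pS _) (by simp; omega)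
  exact not_snoc_prefix_and_snoc_prefix pT pS ⟨hsnoc false, hsnoc true⟩

lemma mem_of_length_le_of_forall_mem (hwS : LTwit S rS qS) (hwT : LTwit T rT qT) {h : ℕ}
    (hlev : ∀ u ∈ T, u.length = h → u ∈ S) {t : Str} (ht : t ∈ T)
    (hlen : t.length ≤ h) : t ∈ S := by
  obtain ⟨v, hv, htv, hvlen⟩ := hwT.exists_mem_extension ht hlen
  exact hwS.mem_of_prefix (hlev v hv hvlen) htv

lemma splN_eq_of_forall_mem (hwS : LTwit S rS qS) (hwT : LTwit T rT qT) (hsub : S ⊆ T) {n : ℕ}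
    (hlev : ∀ u ∈ T, u.length = splN rT qT n → u ∈ S) {k : ℕ} (hk : k < n) :
    splN rS qS k = splN rT qT k := by
  refine le_antisymm ?_ (splN_le_of_subset hwS hwT hsub k)
  refine le_of_forall_le_mem_range hwS.strictMono_splN hwT.strictMono_splN k fun j hj => ?_
  obtain ⟨t, ht, hlen, hsnoc⟩ : splN rT qT j ∈ splittingLevels T :=
    hwT.splittingLevels_eq ▸ ⟨j, rfl⟩
  have hjn : splN rT qT j < splN rT qT n := hwT.strictMono_splN (by omega)
  rw [← hwS.splittingLevels_eq]
  exact ⟨t, mem_of_length_le_of_forall_mem hwS hwT hlev ht (by omega), hlen,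
    fun i => mem_of_length_le_of_forall_mem hwS hwT hlev (hsnoc i) (by simp; omega)⟩

end TwoTrees

/-- Lemma `sadd`(2): for E0-large trees `S, T`, `n < ω`, `h = spl_n(T)`:
`S ⊆_n T` iff `S→s ⊆ T→s` for all `s` of length ≤ n, iff `S ⊆ T` and `S ∩ 2^h = T ∩ 2^h`. -/
theorem stmt6 (S T : Tr) (hS : IsLT S) (hT : IsLT T) (n h : ℕ) (hh : h = spl T n) :
    (subN n S T ↔ ∀ s : Str, s.length ≤ n → splitS S s ⊆ splitS T s) ∧
    (subN n S T ↔ S ⊆ T ∧ {u ∈ S | u.length = h} = {u ∈ T | u.length = h}) := by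
  obtain ⟨rS, qS, hwS⟩ := hS
  obtain ⟨rT, qT, hwT⟩ := hT
  have hsubN : subN n S T ↔ S ⊆ T ∧ ∀ k < n, splN rS qS k = splN rT qT k := by
    rw [subN, hwS.spl_eq, hwT.spl_eq]
  rw [hsubN, hh, hwT.spl_eq]
  refine ⟨⟨fun ⟨hsub, hspl⟩ s hs => splitS_subset_splitS hwS hwT hsub hspl hs, fun hsplit =>
    ⟨hsplit [] (Nat.zero_le n), fun k hk => splN_eq_of_splitS_subset hwS hwT hsplit hk⟩⟩,
    ?_, ?_⟩
  · rintro ⟨hsub, hspl⟩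
    exact ⟨hsub, Set.ext fun u => ⟨fun hu => ⟨hsub hu.1, hu.2⟩,
      fun hu => ⟨mem_of_length_eq_splN hwS hwT hsub hspl hu.1 hu.2, hu.2⟩⟩⟩
  · rintro ⟨hsub, hlev⟩
    exact ⟨hsub, fun k hk => splN_eq_of_forall_mem hwS hwT hsub
      (fun u hu hlen => ((Set.ext_iff.1 hlev u).2 ⟨hu, hlen⟩).1) hk⟩

end E0L
end
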